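/- Under the standing assumption, for every p ∈ S_𝓖 the marginal compatibility class M(p) contains exactly one equilibrium of the recombination dynamics, namely the point q with q(g) = ∏_{i ∈ 𝓛} pᵢ(gᵢ) for all g ∈ 𝓖. -/

import Mathlib

open Finset

/-- Recombination of gametes `g` and `h` following pattern `{I, Iᶜ}`:
`(g_I h_J)ᵢ = gᵢ` for `i ∈ I` and `= hᵢ` for `i ∈ J = Iᶜ`. -/
def recomb {L : Type} [DecidableEq L] {A : L → Type} (I : Finset L)
    (g h : ∀ i, A i) : ∀ i, A i :=
  fun i => if i ∈ I then g i else h i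

/-- The recombination vector field
`F(p) = (1/2) Σ_{g,h} Σ_{{I,J} ∈ 𝓟} c({I,J}) p(g) p(h) (g_I h_J + g_J h_I − g − h)`,
where the sum over unordered patterns `{I,J}` is written as `(1/2) Σ_{I : Finset L}`
(every unordered pattern `{I, Iᶜ}` corresponds to exactly two subsets `I` and `Iᶜ`;
the rate constants satisfy `c I = c Iᶜ`). -/
noncomputable def recF {L : Type} [Fintype L] [DecidableEq L] {A : L → Type}
    [∀ i, Fintype (A i)] [∀ i, DecidableEq (A i)]
    (c : Finset L → ℝ) (p : (∀ i, A i) → ℝ) : (∀ i, A i) → ℝ :=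
  fun x => (1 / 4) * ∑ g : ∀ i, A i, ∑ h : ∀ i, A i, ∑ I : Finset L,
    c I * p g * p h *
      ((if x = recomb I g h then 1 else 0) + (if x = recomb Iᶜ g h then 1 else 0)
        - (if x = g then 1 else 0) - (if x = h then 1 else 0))

/-- The marginal frequency `pᵢ(a) = Σ_{g : gᵢ = a} p(g)`. -/
noncomputable def marg {L : Type} [Fintype L] [DecidableEq L] {A : L → Type}
    [∀ i, Fintype (A i)] [∀ i, DecidableEq (A i)]
    (p : (∀ i, A i) → ℝ) (i : L) (a : A i) : ℝ :=
  ∑ g : ∀ j, A j, if g i = a then p g else 0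

/-!
The product `q` of the marginals is fixed by every recombinator `r ↦ r_I ⊗ r_{Iᶜ}`, so it is an
equilibrium. Conversely, an equilibrium `r` of total mass one is the convex combination
`∑_I c_I u_I / ∑_I c_I` of the `u_I = r_I ⊗ r_{Iᶜ}`. Jensen's inequality for `t log t` bounds
`∑ r log r` above by the weighted average of the `∑ u_I log u_I`, while
`∑ u_I log u_I = ∑ r log u_I` and Gibbs' inequality bound each of these by `∑ r log r`, strictly
unless `u_I = r`. Hence `r` factorises along every pattern of positive rate. A separating
pattern `I` splits the marginal `r_K` of every set `K` of at least two loci as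
`r_{K ∩ I} ⊗ r_{K \ I}`, and induction on `K` gives `r = ∏ᵢ rᵢ = q`.
-/

section Gibbs

open Real

variable {t s : ℝ} {ι : Type*} [Fintype ι] {r u : ι → ℝ}

lemma mul_log_sub_mul_log_lt_sub (ht : 0 ≤ t) (hs : 0 ≤ s) (hts : t ≠ 0 → s ≠ 0)
    (hne : t ≠ s) : t * log s - t * log t < s - t := by
  rcases ht.eq_or_lt with rfl | ht
  · simpa using hs.lt_of_ne hne
  have hs : 0 < s := hs.lt_of_ne' (hts ht.ne')
  have hlog : log (s / t) < s / t - 1 :=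
    log_lt_sub_one_of_pos (div_pos hs ht) fun h => hne ((div_eq_one_iff_eq ht.ne').mp h).symm
  rw [log_div hs.ne' ht.ne'] at hlog
  calc t * log s - t * log t = t * (log s - log t) := by ring
    _ < t * (s / t - 1) := mul_lt_mul_of_pos_left hlog ht
    _ = s - t := by field_simp

lemma mul_log_sub_mul_log_le_sub (ht : 0 ≤ t) (hs : 0 ≤ s) (hts : t ≠ 0 → s ≠ 0) :
    t * log s - t * log t ≤ s - t := by
  rcases eq_or_ne t s with rfl | hne
  · simp
  · exact (mul_log_sub_mul_log_lt_sub ht hs hts hne).le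

lemma sum_mul_log_le_sum_mul_log_self (hr : ∀ x, 0 ≤ r x) (hu : ∀ x, 0 ≤ u x)
    (hsupp : ∀ x, r x ≠ 0 → u x ≠ 0) (hsum : ∑ x, r x = ∑ x, u x) :
    ∑ x, r x * log (u x) ≤ ∑ x, r x * log (r x) := by
  have := sum_le_sum fun x (_ : x ∈ univ) => mul_log_sub_mul_log_le_sub (hr x) (hu x) (hsupp x)
  simp only [sum_sub_distrib, hsum, sub_self] at this
  linarith

lemma sum_mul_log_lt_sum_mul_log_self (hr : ∀ x, 0 ≤ r x) (hu : ∀ x, 0 ≤ u x)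
    (hsupp : ∀ x, r x ≠ 0 → u x ≠ 0) (hsum : ∑ x, r x = ∑ x, u x) (hne : r ≠ u) :
    ∑ x, r x * log (u x) < ∑ x, r x * log (r x) := by
  obtain ⟨x₀, hx₀⟩ := Function.ne_iff.mp hne
  have := sum_lt_sum (fun x (_ : x ∈ univ) => mul_log_sub_mul_log_le_sub (hr x) (hu x) (hsupp x))
    ⟨x₀, mem_univ _, mul_log_sub_mul_log_lt_sub (hr x₀) (hu x₀) (hsupp x₀) hx₀⟩
  simp only [sum_sub_distrib, hsum, sub_self] at this
  linarith

end Gibbs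

lemma eq_recomb_of_forall_eq {L : Type} [Fintype L] [DecidableEq L] {A : L → Type}
    {I : Finset L} {g h x : ∀ i, A i} (hg : ∀ i ∈ I, g i = x i) (hh : ∀ i ∈ Iᶜ, h i = x i) :
    x = recomb I g h := by
  funext i
  by_cases hi : i ∈ I
  · simp [recomb, hi, hg i hi]
  · simp [recomb, hi, hh i (mem_compl.mpr hi)]

section Recombinator

variable {L : Type} [Fintype L] [DecidableEq L] {A : L → Type}
  [∀ i, Fintype (A i)] [∀ i, DecidableEq (A i)]

noncomputable def margOn (K : Finset L) (r : (∀ i, A i) → ℝ) (x : ∀ i, A i) : ℝ :=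
  ∑ g : ∀ i, A i, if ∀ i ∈ K, g i = x i then r g else 0

noncomputable def recombinator (I : Finset L) (r : (∀ i, A i) → ℝ) (x : ∀ i, A i) : ℝ :=
  margOn I r x * margOn Iᶜ r x

lemma margOn_nonneg {r : (∀ i, A i) → ℝ} (hr : ∀ g, 0 ≤ r g) (K : Finset L) (x : ∀ i, A i) :
    0 ≤ margOn K r x :=
  sum_nonneg fun g _ => by split_ifs <;> simp [hr g]

lemma marg_nonneg {r : (∀ i, A i) → ℝ} (hr : ∀ g, 0 ≤ r g) (i : L) (a : A i) :
    0 ≤ marg r i a :=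
  sum_nonneg fun g _ => by split_ifs <;> simp [hr g]

lemma le_margOn {r : (∀ i, A i) → ℝ} (hr : ∀ g, 0 ≤ r g) (K : Finset L) (x : ∀ i, A i) :
    r x ≤ margOn K r x := by
  have := single_le_sum (fun g _ => by split_ifs <;> simp [hr g]) (mem_univ x)
    (f := fun g => if ∀ i ∈ K, g i = x i then r g else 0)
  simpa [margOn] using this

lemma margOn_empty (r : (∀ i, A i) → ℝ) (x : ∀ i, A i) : margOn ∅ r x = ∑ g, r g := by
  simp [margOn]

lemma margOn_univ (r : (∀ i, A i) → ℝ) (x : ∀ i, A i) : margOn univ r x = r x := by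
  simp [margOn, ← funext_iff]

lemma margOn_singleton (r : (∀ i, A i) → ℝ) (i : L) (x : ∀ i, A i) :
    margOn {i} r x = marg r i (x i) := by
  simp [margOn, marg]

lemma sum_marg (r : (∀ i, A i) → ℝ) (i : L) : ∑ a, marg r i a = ∑ g, r g := by
  simp only [marg]
  rw [sum_comm]
  simp

/-- `recombinator I r` is the law of `recomb I g h` for independent `g, h` drawn from `r`. -/
lemma sum_recombinator_mul (I : Finset L) (r Φ : (∀ i, A i) → ℝ) :
    ∑ x, recombinator I r x * Φ x = ∑ g, ∑ h, r g * r h * Φ (recomb I g h) := by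
  have hcollapse : ∀ g h : ∀ i, A i,
      ∑ x, (if ∀ i ∈ I, g i = x i then r g else 0) * (if ∀ i ∈ Iᶜ, h i = x i then r h else 0)
        * Φ x = r g * r h * Φ (recomb I g h) := fun g h => by
    rw [sum_eq_single (recomb I g h)]
    · rw [if_pos fun i hi => by simp [recomb, hi], if_pos fun i hi => by
        simp [recomb, mem_compl.mp hi]]
    · intro x _ hx
      by_cases hg : ∀ i ∈ I, g i = x i
      · have hh : ¬∀ i ∈ Iᶜ, h i = x i := fun hh => hx (eq_recomb_of_forall_eq hg hh)
        simp only [if_neg hh, mul_zero, zero_mul]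
      · simp only [if_neg hg, zero_mul]
    · simp
  simp only [recombinator, margOn, sum_mul_sum]
  simp only [sum_mul]
  rw [sum_comm]
  refine sum_congr rfl fun g _ => ?_
  rw [sum_comm]
  exact sum_congr rfl fun h _ => hcollapse g h

lemma sum_recombinator_mul_of_forall_eq {I : Finset L} (r : (∀ i, A i) → ℝ)
    {ψ : (∀ i, A i) → ℝ} (hψ : ∀ x y : ∀ i, A i, (∀ i ∈ I, x i = y i) → ψ x = ψ y) :
    ∑ x, recombinator I r x * ψ x = (∑ g, r g) * ∑ x, r x * ψ x := by
  have hψ' : ∀ g h : ∀ i, A i, ψ (recomb I g h) = ψ g := fun g h =>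
    hψ _ _ fun i hi => by simp [recomb, hi]
  simp only [sum_recombinator_mul, hψ', sum_mul_sum]
  rw [sum_comm]
  exact sum_congr rfl fun g _ => sum_congr rfl fun h _ => by ring

lemma recombinator_compl (I : Finset L) (r : (∀ i, A i) → ℝ) :
    recombinator Iᶜ r = recombinator I r := by
  funext x
  rw [recombinator, recombinator, compl_compl, mul_comm]

lemma sum_recombinator (I : Finset L) (r : (∀ i, A i) → ℝ) :
    ∑ x, recombinator I r x = (∑ g, r g) ^ 2 := by
  simpa [sq, sum_mul_sum] using sum_recombinator_mul I r 1

lemma recombinator_eq_sum (I : Finset L) (r : (∀ i, A i) → ℝ) (x : ∀ i, A i) :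
    recombinator I r x = ∑ g, ∑ h, r g * r h * if x = recomb I g h then 1 else 0 := by
  simpa using sum_recombinator_mul I r fun y => if x = y then 1 else 0

lemma margOn_recombinator (K I : Finset L) (r : (∀ i, A i) → ℝ) (x : ∀ i, A i) :
    margOn K (recombinator I r) x = margOn (K ∩ I) r x * margOn (K \ I) r x := by
  have hagree : ∀ g h : ∀ i, A i, (∀ i ∈ K, recomb I g h i = x i) ↔
      (∀ i ∈ K ∩ I, g i = x i) ∧ ∀ i ∈ K \ I, h i = x i := fun g h => by
    simp only [recomb, mem_inter, mem_sdiff]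
    constructor
    · intro hK
      exact ⟨fun i hi => by simpa [hi.2] using hK i hi.1,
        fun i hi => by simpa [hi.2] using hK i hi.1⟩
    · rintro ⟨hI, hIc⟩ i hi
      split_ifs with hiI
      exacts [hI i ⟨hi, hiI⟩, hIc i ⟨hi, hiI⟩]
  have := sum_recombinator_mul I r fun y => if ∀ i ∈ K, y i = x i then 1 else 0
  simp only [mul_boole] at this
  simp only [margOn, this, hagree, sum_mul_sum]
  refine sum_congr rfl fun g _ => sum_congr rfl fun h _ => ?_
  split_ifs <;> simp_all

lemma recF_apply (c : Finset L → ℝ) (r : (∀ i, A i) → ℝ) (x : ∀ i, A i) :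
    recF c r x = (1 / 2) * ∑ I, c I * (recombinator I r x - r x * ∑ g, r g) := by
  have hleft : ∑ g, ∑ h, r g * r h * (if x = g then 1 else 0) = r x * ∑ g, r g := by
    simp [← mul_sum]
  have hright : ∑ g, ∑ h, r g * r h * (if x = h then 1 else 0) = r x * ∑ g, r g := by
    simp [← mul_sum, mul_comm]
  have hI : ∀ I : Finset L, ∑ g, ∑ h, c I * r g * r h *
      ((if x = recomb I g h then 1 else 0) + (if x = recomb Iᶜ g h then 1 else 0)
        - (if x = g then 1 else 0) - (if x = h then 1 else 0))
      = 2 * (c I * (recombinator I r x - r x * ∑ g, r g)) := fun I => by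
    have hexpand : ∀ g h : ∀ i, A i, ∀ a b d e : ℝ, c I * r g * r h * (a + b - d - e)
        = c I * (r g * r h * a + r g * r h * b - r g * r h * d - r g * r h * e) :=
      fun _ _ _ _ _ _ => by ring
    simp only [hexpand, ← mul_sum, sum_add_distrib, sum_sub_distrib]
    rw [← recombinator_eq_sum, ← recombinator_eq_sum, hleft, hright, recombinator_compl]
    ring
  rw [recF, sum_congr rfl fun g _ => sum_comm, sum_comm]
  simp only [hI, ← mul_sum]
  ring

end Recombinator

section Product

variable {L : Type} [Fintype L] [DecidableEq L] {A : L → Type}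
  [∀ i, Fintype (A i)] [∀ i, DecidableEq (A i)] {m : ∀ i, A i → ℝ}

lemma margOn_prod (hm : ∀ i, ∑ a, m i a = 1) (K : Finset L) (x : ∀ i, A i) :
    margOn K (fun g => ∏ i, m i (g i)) x = ∏ i ∈ K, m i (x i) := by
  have hfactor : ∀ g : ∀ i, A i, (if ∀ i ∈ K, g i = x i then ∏ i, m i (g i) else 0)
      = ∏ i, if i ∈ K → g i = x i then m i (g i) else 0 := fun g => by
    rw [Fintype.prod_ite_zero]
  have hsum : ∀ i, ∑ a, (if i ∈ K → a = x i then m i a else 0)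
      = if i ∈ K then m i (x i) else 1 := fun i => by
    by_cases hi : i ∈ K <;> simp [hi, hm i]
  simp only [margOn, hfactor]
  rw [← Fintype.prod_sum fun i a => if i ∈ K → a = x i then m i a else 0]
  simp only [hsum, Fintype.prod_ite_mem]

lemma marg_prod (hm : ∀ i, ∑ a, m i a = 1) (i : L) (a : A i) :
    marg (fun g => ∏ i, m i (g i)) i a = m i a := by
  have hne : ∀ j, Nonempty (A j) := fun j => by
    by_contra h
    simpa [not_nonempty_iff.mp h] using hm j
  let x : ∀ j, A j := Function.update (fun j => (hne j).some) i a
  have hx : x i = a := Function.update_self i a _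
  rw [← hx, ← margOn_singleton, margOn_prod hm, prod_singleton]

lemma recombinator_prod (hm : ∀ i, ∑ a, m i a = 1) (I : Finset L) :
    recombinator I (fun g => ∏ i, m i (g i)) = fun g => ∏ i, m i (g i) := by
  funext x
  rw [recombinator, margOn_prod hm, margOn_prod hm, prod_mul_prod_compl]

end Product

section Equilibrium

open Real

variable {L : Type} [Fintype L] [DecidableEq L] {A : L → Type}
  [∀ i, Fintype (A i)] [∀ i, DecidableEq (A i)] {r : (∀ i, A i) → ℝ}

lemma margOn_congr (K : Finset L) (r : (∀ i, A i) → ℝ) {x y : ∀ i, A i}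
    (hxy : ∀ i ∈ K, x i = y i) : margOn K r x = margOn K r y :=
  sum_congr rfl fun g _ => if_congr (forall₂_congr fun i hi => by rw [hxy i hi]) rfl rfl

lemma recombinator_nonneg (hr : ∀ g, 0 ≤ r g) (I : Finset L) (x : ∀ i, A i) :
    0 ≤ recombinator I r x :=
  mul_nonneg (margOn_nonneg hr I x) (margOn_nonneg hr Iᶜ x)

lemma recombinator_ne_zero (hr : ∀ g, 0 ≤ r g) (I : Finset L) {x : ∀ i, A i} (hx : r x ≠ 0) :
    recombinator I r x ≠ 0 := by
  have hpos : 0 < r x := (hr x).lt_of_ne' hx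
  exact (mul_pos (hpos.trans_le (le_margOn hr I x)) (hpos.trans_le (le_margOn hr Iᶜ x))).ne'

lemma sum_recombinator_mul_log (hr : ∀ g, 0 ≤ r g) (hr1 : ∑ g, r g = 1) (I : Finset L) :
    ∑ x, recombinator I r x * log (recombinator I r x)
      = ∑ x, r x * log (recombinator I r x) := by
  have hsplit : ∀ s : (∀ i, A i) → ℝ, (∀ x, s x ≠ 0 → recombinator I r x ≠ 0) →
      ∑ x, s x * log (recombinator I r x)
        = ∑ x, s x * log (margOn I r x) + ∑ x, s x * log (margOn Iᶜ r x) := fun s hs => by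
    rw [← sum_add_distrib]
    refine sum_congr rfl fun x _ => ?_
    by_cases hx : s x = 0
    · simp [hx]
    · have hu := hs x hx
      rw [recombinator] at hu ⊢
      rw [log_mul (left_ne_zero_of_mul hu) (right_ne_zero_of_mul hu), mul_add]
  rw [hsplit _ fun _ => id, hsplit r fun _ => recombinator_ne_zero hr I,
    sum_recombinator_mul_of_forall_eq r fun x y hxy => by rw [margOn_congr I r hxy],
    ← recombinator_compl,
    sum_recombinator_mul_of_forall_eq r fun x y hxy => by rw [margOn_congr Iᶜ r hxy],
    hr1, one_mul, one_mul]

lemma recombinator_eq_self_of_eq_sum {w : Finset L → ℝ} (hw0 : ∀ I, 0 ≤ w I)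
    (hw1 : ∑ I, w I = 1) (hr : ∀ g, 0 ≤ r g) (hr1 : ∑ g, r g = 1)
    (hrw : ∀ x, r x = ∑ I, w I * recombinator I r x) {I : Finset L} (hwI : 0 < w I) :
    recombinator I r = r := by
  by_contra hne
  have hsupp : ∀ J x, r x ≠ 0 → recombinator J r x ≠ 0 := fun J _ => recombinator_ne_zero hr J
  have hsum : ∀ J, ∑ x, r x = ∑ x, recombinator J r x := fun J => by
    rw [sum_recombinator, hr1, one_pow]
  have hjensen : ∀ x, r x * log (r x)
      ≤ ∑ J, w J * (recombinator J r x * log (recombinator J r x)) := fun x => by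
    simpa only [← hrw, smul_eq_mul] using convexOn_mul_log.map_sum_le (fun J _ => hw0 J) hw1
      fun J _ => Set.mem_Ici.mpr (recombinator_nonneg hr J x)
  have hgibbs : ∀ J, w J * ∑ x, recombinator J r x * log (recombinator J r x)
      ≤ w J * ∑ x, r x * log (r x) := fun J => by
    rw [sum_recombinator_mul_log hr hr1]
    exact mul_le_mul_of_nonneg_left (sum_mul_log_le_sum_mul_log_self hr
      (recombinator_nonneg hr J) (hsupp J) (hsum J)) (hw0 J)
  have hgibbs_strict : w I * ∑ x, recombinator I r x * log (recombinator I r x)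
      < w I * ∑ x, r x * log (r x) := by
    rw [sum_recombinator_mul_log hr hr1]
    exact mul_lt_mul_of_pos_left (sum_mul_log_lt_sum_mul_log_self hr
      (recombinator_nonneg hr I) (hsupp I) (hsum I) (Ne.symm hne)) hwI
  refine lt_irrefl (∑ x, r x * log (r x)) ?_
  calc ∑ x, r x * log (r x)
      ≤ ∑ x, ∑ J, w J * (recombinator J r x * log (recombinator J r x)) :=
        sum_le_sum fun x _ => hjensen x
    _ = ∑ J, w J * ∑ x, recombinator J r x * log (recombinator J r x) := by
        rw [sum_comm]
        simp only [mul_sum]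
    _ < ∑ J, w J * ∑ x, r x * log (r x) :=
        sum_lt_sum (fun J _ => hgibbs J) ⟨I, mem_univ I, hgibbs_strict⟩
    _ = ∑ x, r x * log (r x) := by rw [← sum_mul, hw1, one_mul]

lemma recombinator_eq_self_of_recF_eq_zero {c : Finset L → ℝ} (hc : ∀ I, 0 ≤ c I)
    (hr : ∀ g, 0 ≤ r g) (hr1 : ∑ g, r g = 1) (hF : recF c r = 0) {I : Finset L}
    (hcI : 0 < c I) : recombinator I r = r := by
  have hC : 0 < ∑ J, c J := hcI.trans_le (single_le_sum (fun J _ => hc J) (mem_univ I))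
  refine recombinator_eq_self_of_eq_sum (w := fun J => c J / ∑ J, c J)
    (fun J => div_nonneg (hc J) hC.le) (by rw [← sum_div, div_self hC.ne']) hr hr1
    (fun x => ?_) (div_pos hcI hC)
  have hx := congrFun hF x
  rw [recF_apply, hr1, Pi.zero_apply] at hx
  simp only [mul_one, mul_sub, sum_sub_distrib, ← sum_mul] at hx
  simp only [div_mul_eq_mul_div, ← sum_div]
  rw [eq_div_iff hC.ne']
  linarith

lemma margOn_eq_prod_marg (hr1 : ∑ g, r g = 1)
    (hsep : ∀ i j, i ≠ j → ∃ I, i ∈ I ∧ j ∉ I ∧ recombinator I r = r)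
    (K : Finset L) (x : ∀ i, A i) : margOn K r x = ∏ i ∈ K, marg r i (x i) := by
  induction K using Finset.strongInduction with
  | H K ih =>
  rcases K.eq_empty_or_nonempty with rfl | hK
  · rw [margOn_empty, hr1, prod_empty]
  rcases hK.exists_eq_singleton_or_nontrivial with ⟨i, rfl⟩ | ⟨i, hi, j, hj, hij⟩
  · rw [margOn_singleton, prod_singleton]
  obtain ⟨I, hiI, hjI, hI⟩ := hsep i j hij
  have hinter : K ∩ I ⊂ K := (ssubset_iff_of_subset inter_subset_left).mpr
    ⟨j, hj, fun h => hjI (mem_inter.mp h).2⟩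
  have hsdiff : K \ I ⊂ K := (ssubset_iff_of_subset sdiff_subset).mpr
    ⟨i, hi, fun h => (mem_sdiff.mp h).2 hiI⟩
  rw [← hI, margOn_recombinator, hI, ih _ hinter, ih _ hsdiff, prod_inter_mul_prod_sdiff]

end Equilibrium

theorem unique_equilibrium_in_marginal_class_general
    {L : Type} [Fintype L] [DecidableEq L] [Nonempty L]
    (A : L → Type) [∀ i, Fintype (A i)] [∀ i, DecidableEq (A i)]
    (c : Finset L → ℝ) (hc : ∀ I, 0 ≤ c I)
    (hsep : ∀ i j : L, i ≠ j →
      0 < ∑ I ∈ univ.filter (fun I : Finset L => i ∈ I ∧ j ∉ I), c I)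
    (p : (∀ i, A i) → ℝ) (hp0 : ∀ g, 0 ≤ p g) (hp1 : ∑ g : ∀ i, A i, p g = 1)
    (q : (∀ i, A i) → ℝ) (hq : q = fun g => ∏ i : L, marg p i (g i)) :
    ((∀ g, 0 ≤ q g) ∧ (∀ (i : L) (a : A i), marg q i a = marg p i a) ∧ recF c q = 0) ∧
    (∀ r : (∀ i, A i) → ℝ, (∀ g, 0 ≤ r g) →
      (∀ (i : L) (a : A i), marg r i a = marg p i a) → recF c r = 0 → r = q) := by
  subst hq
  have hm : ∀ i, ∑ a, marg p i a = 1 := fun i => (sum_marg p i).trans hp1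
  refine ⟨⟨fun g => prod_nonneg fun i _ => marg_nonneg hp0 i (g i), marg_prod hm, ?_⟩, ?_⟩
  · funext x
    simp only [recF_apply, recombinator_prod hm]
    rw [← margOn_empty _ x, margOn_prod hm]
    simp
  intro r hr hrp hrF
  have hr1 : ∑ g, r g = 1 := by
    obtain ⟨i⟩ := ‹Nonempty L›
    rw [← sum_marg r i, ← hm i]
    exact sum_congr rfl fun a _ => hrp i a
  have hsepr : ∀ i j, i ≠ j → ∃ I, i ∈ I ∧ j ∉ I ∧ recombinator I r = r := fun i j hij => by
    obtain ⟨I, hI, hcI⟩ := exists_lt_of_sum_lt ((sum_const_zero).trans_lt (hsep i j hij))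
    exact ⟨I, (mem_filter.mp hI).2.1, (mem_filter.mp hI).2.2,
      recombinator_eq_self_of_recF_eq_zero hc hr hr1 hrF hcI⟩
  funext x
  simp only [← margOn_univ r x, margOn_eq_prod_marg hr1 hsepr, hrp]

/-- **Unique equilibrium in every marginal compatibility class (Proposition 1).**
Under the standing assumption, for every `p` in the simplex `S_𝓖`, the marginal
compatibility class `M(p) = {p' ≥ 0 : p'ᵢ(a) = pᵢ(a) for all i, a}` contains exactly one
equilibrium of the recombination dynamics, namely `q(g) = ∏ᵢ pᵢ(gᵢ)`. -/
theorem unique_equilibrium_in_marginal_class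
    {L : Type} [Fintype L] [DecidableEq L] [Nonempty L]
    (A : L → Type) [∀ i, Fintype (A i)] [∀ i, DecidableEq (A i)]
    (hA : ∀ i, 2 ≤ Fintype.card (A i))
    (c : Finset L → ℝ) (hc : ∀ I, 0 ≤ c I) (hcsym : ∀ I, c I = c Iᶜ)
    (hsep : ∀ i j : L, i ≠ j →
      0 < ∑ I ∈ univ.filter (fun I : Finset L => i ∈ I ∧ j ∉ I), c I)
    (p : (∀ i, A i) → ℝ) (hp0 : ∀ g, 0 ≤ p g) (hp1 : ∑ g : ∀ i, A i, p g = 1)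
    (q : (∀ i, A i) → ℝ) (hq : q = fun g => ∏ i : L, marg p i (g i)) :
    ((∀ g, 0 ≤ q g) ∧ (∀ (i : L) (a : A i), marg q i a = marg p i a) ∧ recF c q = 0) ∧
    (∀ r : (∀ i, A i) → ℝ, (∀ g, 0 ≤ r g) →
      (∀ (i : L) (a : A i), marg r i a = marg p i a) → recF c r = 0 → r = q) :=
  unique_equilibrium_in_marginal_class_general A c hc hsep p hp0 hp1 q hq
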